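/- Let Y_1, …, Y_m, Z be independent and identically distributed real-valued random variables, let G_m be the empirical cumulative distribution function of Y_1, …, Y_m, and let G_m^† denote its pseudo-inverse. Then for every Δ ∈ (0,1), the joint probability (over the sample Y_1, …, Y_m and Z) satisfies P(Z ≤ G_m^†(Δ)) ≥ ρ(Δ, m), where ρ(a, d) = sup_{ε ∈ (0,1]} max(a − ε, 0)·(1 − 2·exp(−2dε²)). -/

import Mathlib

open MeasureTheory ProbabilityTheory

/-- Empirical cumulative distribution function of the sample `x : Fin m → ℝ`. -/
noncomputable def ecdf {m : ℕ} (x : Fin m → ℝ) (s : ℝ) : ℝ :=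
  (1 / m) * ∑ i, if x i ≤ s then (1 : ℝ) else 0

/-- Pseudo-inverse of a function `G : ℝ → ℝ`: `G†(y) = inf {x | G x ≥ y}`. -/
noncomputable def pinv (G : ℝ → ℝ) (y : ℝ) : ℝ :=
  sInf {x : ℝ | G x ≥ y}

/-- `ρ(a, d) = sup_{ε ∈ (0,1]} max(a - ε, 0) (1 - 2 exp(-2 d ε²))`. -/
noncomputable def rho (a : ℝ) (d : ℕ) : ℝ :=
  ⨆ ε : Set.Ioc (0 : ℝ) 1, max (a - ε.1) 0 * (1 - 2 * Real.exp (-2 * d * ε.1 ^ 2))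

open Finset
open scoped ENNReal

/-! The event `Z ≤ G_m^†(Δ)` contains the event that fewer than `⌈Δ m⌉` of the `Y_i` lie strictly
below `Z`. The vector `(Y_1, …, Y_m, Z)` is exchangeable, so each of its `m + 1` coordinates has
the same probability of having fewer than `⌈Δ m⌉` coordinates strictly below it; and in every
realization at least `⌈Δ m⌉` coordinates have this property (the one with the smallest value among
those that do not would have only such coordinates below it). Hence the probability is at least
`⌈Δ m⌉ / (m + 1) ≥ Δ m / (m + 1)`.

This already dominates `ρ(Δ, m)`: for `ε < 1 / (m + 1)` the factor `1 - 2 exp (-2 m ε²)` is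
nonpositive, and otherwise `max (Δ - ε) 0 ≤ Δ - Δ / (m + 1)`. -/

theorem one_sub_two_mul_exp_nonpos {d ε : ℝ} (hε0 : 0 ≤ ε) (hε : ε * (d + 1) < 1) :
    1 - 2 * Real.exp (-2 * d * ε ^ 2) ≤ 0 := by
  have hsmall : 2 * d * ε ^ 2 ≤ 1 / 2 := by
    nlinarith [mul_nonneg (sq_nonneg ε) (sq_nonneg (d - 1))]
  linarith [Real.add_one_le_exp (-2 * d * ε ^ 2)]

theorem rho_le_mul_div {a : ℝ} (ha0 : 0 ≤ a) (ha1 : a ≤ 1) (d : ℕ) :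
    rho a d ≤ a * d / (d + 1) := by
  have hbound : 0 ≤ a * d / (d + 1) := by positivity
  refine ciSup_le fun ⟨ε, hε0, _⟩ => ?_
  by_cases hε : ε * (d + 1) < 1
  · exact (mul_nonpos_of_nonneg_of_nonpos (le_max_right _ _)
      (one_sub_two_mul_exp_nonpos hε0.le hε)).trans hbound
  · calc max (a - ε) 0 * (1 - 2 * Real.exp (-2 * d * ε ^ 2)) ≤ max (a - ε) 0 * 1 := by
          gcongr
          linarith [Real.exp_pos (-2 * d * ε ^ 2)]
      _ ≤ a * d / (d + 1) := by
          rw [mul_one]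
          refine max_le ?_ hbound
          rw [le_div_iff₀ (by positivity)]
          nlinarith

section Rank

variable {ι α : Type*} [Fintype ι]

def countBelow [LinearOrder α] (x : ι → α) (a : α) : ℕ := #{i | x i < a}

theorem le_card_countBelow_lt [LinearOrder α] (x : ι → α) {k : ℕ} (hk : k ≤ Fintype.card ι) :
    k ≤ #{j | countBelow x (x j) < k} := by
  classical
  set S : Finset ι := {j | countBelow x (x j) < k}
  by_contra! hS
  obtain ⟨j, hjS, hmin⟩ : ∃ j ∈ Sᶜ, ∀ i ∈ Sᶜ, x j ≤ x i :=
    Sᶜ.exists_min_image x (by rw [← card_pos, card_compl]; omega)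
  have hcount : countBelow x (x j) ≤ #S := card_le_card fun i hi => by
    by_contra hiS
    exact (mem_filter.1 hi).2.not_ge (hmin i (mem_compl.2 hiS))
  exact mem_compl.1 hjS (mem_filter.2 ⟨mem_univ j, hcount.trans_lt hS⟩)

theorem countBelow_comp_equiv {ι' : Type*} [Fintype ι'] [LinearOrder α] (x : ι' → α) (e : ι ≃ ι')
    (a : α) :
    countBelow (x ∘ e) a = countBelow x a :=
  card_equiv e (by simp)

theorem countBelow_sum_elim [LinearOrder α] (y : ι → α) (z : α) :
    countBelow (Sum.elim y fun _ : Unit => z) z = countBelow y z := by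
  rw [countBelow, countBelow, card_filter, card_filter, Fintype.sum_sum_type]
  simp only [Sum.elim_inl, Sum.elim_inr, lt_irrefl, if_false, sum_const_zero, add_zero]
  congr! 2

end Rank

section Exchangeability

variable {ι : Type*} [Fintype ι]

theorem measurePreserving_comp_equiv {ι' α : Type*} [Fintype ι'] [MeasurableSpace α]
    (μ : Measure α) [SigmaFinite μ] (e : ι ≃ ι') :
    MeasurePreserving (fun x : ι' → α => x ∘ e) (Measure.pi fun _ => μ)
      (Measure.pi fun _ => μ) := by
  convert measurePreserving_piCongrLeft (fun _ : ι => μ) e.symm using 1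
  ext x i
  simp [MeasurableEquiv.piCongrLeft, Equiv.piCongrLeft, Equiv.piCongrLeft']

theorem measurableSet_countBelow_self_lt (j : ι) (k : ℕ) :
    MeasurableSet {x : ι → ℝ | countBelow x (x j) < k} := by
  refine measurableSet_lt ?_ measurable_const
  simp_rw [countBelow, card_filter]
  exact Finset.measurable_sum _ fun i _ => Measurable.ite
    (measurableSet_lt (measurable_pi_apply i) (measurable_pi_apply j)) measurable_const
    measurable_const

theorem pi_countBelow_lt_eq (μ : Measure ℝ) [SigmaFinite μ] (k : ℕ) (i j : ι) :
    Measure.pi (fun _ : ι => μ) {x | countBelow x (x i) < k}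
      = Measure.pi (fun _ : ι => μ) {x | countBelow x (x j) < k} := by
  classical
  have hpre : (fun x : ι → ℝ => x ∘ Equiv.swap i j) ⁻¹' {x | countBelow x (x i) < k}
      = {x | countBelow x (x j) < k} := by
    ext x
    simp [countBelow_comp_equiv]
  rw [← hpre, (measurePreserving_comp_equiv μ _).measure_preimage
    (measurableSet_countBelow_self_lt i k).nullMeasurableSet]

theorem natCast_div_card_le_pi_countBelow_lt (μ : Measure ℝ) [IsProbabilityMeasure μ] (j : ι)
    {k : ℕ} (hk : k ≤ Fintype.card ι) :
    (k : ℝ≥0∞) / Fintype.card ι ≤ Measure.pi (fun _ : ι => μ) {x | countBelow x (x j) < k} := by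
  set ν := Measure.pi fun _ : ι => μ
  refine ENNReal.div_le_of_le_mul ?_
  calc (k : ℝ≥0∞) = ∫⁻ _, (k : ℝ≥0∞) ∂ν := by simp
    _ ≤ ∫⁻ x, ∑ i, {x : ι → ℝ | countBelow x (x i) < k}.indicator 1 x ∂ν := by
        refine lintegral_mono fun x => ?_
        simp only [Set.indicator_apply, Set.mem_ofPred_eq, Pi.one_apply, sum_boole]
        exact_mod_cast le_card_countBelow_lt x hk
    _ = ∑ i, ν {x | countBelow x (x i) < k} := by
        rw [lintegral_finsetSum _ fun i _ =>
          measurable_one.indicator (measurableSet_countBelow_self_lt i k)]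
        simp_rw [lintegral_indicator_one (measurableSet_countBelow_self_lt _ k)]
    _ = ν {x | countBelow x (x j) < k} * Fintype.card ι := by
        rw [sum_congr rfl fun i _ => pi_countBelow_lt_eq μ k i j, sum_const, card_univ,
          nsmul_eq_mul, mul_comm]

end Exchangeability

theorem ProbabilityTheory.iIndepFun.map_fun_eq_pi_of_map_eq {Ω ι β : Type*}
    [MeasurableSpace Ω] [MeasurableSpace β] [Fintype ι] {P : Measure Ω} {X : ι → Ω → β}
    (hX : ∀ i, Measurable (X i)) (hindep : iIndepFun X P) {ν : Measure β}
    (hν : ∀ i, P.map (X i) = ν) :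
    P.map (fun ω i => X i ω) = Measure.pi fun _ => ν := by
  rw [hindep.map_fun_eq_pi_map fun i => (hX i).aemeasurable]
  simp_rw [hν]

theorem ecdf_eq_card_div {m : ℕ} (y : Fin m → ℝ) (s : ℝ) : ecdf y s = #{i | y i ≤ s} / m := by
  rw [ecdf, sum_boole]
  ring

theorem le_pinv_ecdf {m : ℕ} (y : Fin m → ℝ) {Δ z : ℝ} (hΔ : Δ ≤ 1)
    (hz : (countBelow y z : ℝ) < Δ * m) : z ≤ pinv (ecdf y) Δ := by
  have hm : (0 : ℝ) < m := by
    rcases Nat.eq_zero_or_pos m with rfl | h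
    · exact absurd hz (by simp)
    · exact_mod_cast h
  obtain ⟨b, hb⟩ := (Set.finite_range y).bddAbove
  refine le_csInf ⟨b, ?_⟩ fun s hs => ?_
  · change Δ ≤ ecdf y b
    rwa [ecdf_eq_card_div, filter_true_of_mem fun i _ => hb ⟨i, rfl⟩, card_univ, Fintype.card_fin,
      div_self hm.ne']
  · by_contra! hsz
    have hle : #{i | y i ≤ s} ≤ countBelow y z :=
      card_le_card fun i hi => mem_filter.2 ⟨mem_univ i, (mem_filter.1 hi).2.trans_lt hsz⟩
    have hs' : Δ ≤ ecdf y s := hs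
    rw [ecdf_eq_card_div, le_div_iff₀ hm] at hs'
    have : (#{i | y i ≤ s} : ℝ) ≤ countBelow y z := by exact_mod_cast hle
    linarith

/-- A fresh i.i.d. sample falls at or below the empirical `Δ`-quantile of the
training sample with probability at least `ρ(Δ, m)`. -/
theorem stmt4 {Ω : Type*} [MeasurableSpace Ω] (P : Measure Ω) [IsProbabilityMeasure P]
    {m : ℕ} (Y : Fin m → Ω → ℝ) (Z : Ω → ℝ)
    (hmY : ∀ i, Measurable (Y i)) (hmZ : Measurable Z)
    (hindep : iIndepFun (Sum.elim Y fun _ : Unit => Z) P)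
    (hident : ∀ i, Measure.map (Y i) P = Measure.map Z P)
    (Δ : ℝ) (hΔ : Δ ∈ Set.Ioo (0 : ℝ) 1) :
    (P {ω | Z ω ≤ pinv (ecdf fun i => Y i ω) Δ}).toReal ≥ rho Δ m := by
  obtain ⟨hΔ0, hΔ1⟩ := hΔ
  set X := Sum.elim Y fun _ : Unit => Z
  set k := ⌈Δ * m⌉₊
  set A : Set (Fin m ⊕ Unit → ℝ) := {x | countBelow x (x (Sum.inr ())) < k}
  have hmX : ∀ j, Measurable (X j) := by rintro (i | u); exacts [hmY i, hmZ]
  have : IsProbabilityMeasure (P.map Z) := Measure.isProbabilityMeasure_map hmZ.aemeasurable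
  have hlaw : P.map (fun ω j => X j ω) = Measure.pi fun _ => P.map Z :=
    hindep.map_fun_eq_pi_of_map_eq hmX (by rintro (i | u); exacts [hident i, rfl])
  have hk : k ≤ Fintype.card (Fin m ⊕ Unit) := by
    rw [Fintype.card_sum, Fintype.card_fin, Fintype.card_unit]
    exact (Nat.ceil_le.2 (by nlinarith)).trans m.le_succ
  have hevent : (fun ω j => X j ω) ⁻¹' A ⊆ {ω | Z ω ≤ pinv (ecdf fun i => Y i ω) Δ} := by
    intro ω hω
    have hXω : (fun j => X j ω) = Sum.elim (fun i => Y i ω) fun _ => Z ω := by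
      ext (i | u) <;> rfl
    change countBelow (fun j => X j ω) (Z ω) < k at hω
    rw [hXω, countBelow_sum_elim] at hω
    exact le_pinv_ecdf _ hΔ1.le (Nat.lt_ceil.1 hω)
  have hbound : (k : ℝ≥0∞) / (m + 1) ≤ P {ω | Z ω ≤ pinv (ecdf fun i => Y i ω) Δ} :=
    calc (k : ℝ≥0∞) / (m + 1) ≤ Measure.pi (fun _ => P.map Z) A := by
          simpa using natCast_div_card_le_pi_countBelow_lt (P.map Z) (Sum.inr ()) hk
      _ = P ((fun ω j => X j ω) ⁻¹' A) := by
          rw [← hlaw, Measure.map_apply (measurable_pi_lambda _ hmX)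
            (measurableSet_countBelow_self_lt _ k)]
      _ ≤ _ := measure_mono hevent
  calc rho Δ m ≤ Δ * m / (m + 1) := rho_le_mul_div hΔ0.le hΔ1.le m
    _ ≤ k / (m + 1) := by gcongr; exact Nat.le_ceil _
    _ ≤ _ := by
        simpa [ENNReal.toReal_div, ENNReal.toReal_add] using
          ENNReal.toReal_mono (measure_ne_top _ _) hbound
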